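/- If s is an adult digit string (all digits ≥ 4) with every run length at most 9, then every run length of Z(s) is at most 3 (i.e., no digit appears more than 3 consecutive times in Z(s)). -/

import Mathlib

/-- Run-length encoding of a digit string. -/
def rle : List ℕ → List (ℕ × ℕ)
  | [] => []
  | a :: t =>
    match rle t with
    | [] => [(a, 1)]
    | (b, n) :: r => if a = b then (b, n + 1) :: r else (a, 1) :: (b, n) :: r

/-- The "look-and-say-the-biggest" map: each maximal run of the digit `a` of length `n`
is replaced by the decimal digits of `max n a` followed by the digit `a`.
(When `n ≤ 9` this is just the two digits `max n a`, `a`.) -/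
def Z (s : List ℕ) : List ℕ :=
  ((rle s).map fun p => (Nat.digits 10 (max p.2 p.1)).reverse ++ [p.1]).flatten

/-- `r` is a run-length representation of the digit string `s`: all run lengths are
positive, consecutive base digits differ, and the expansion of `r` equals `s`. -/
def IsRLE (r : List (ℕ × ℕ)) (s : List ℕ) : Prop :=
  (∀ p ∈ r, 1 ≤ p.2) ∧ (r.map Prod.fst).Chain' (· ≠ ·) ∧
    (r.map fun p => List.replicate p.2 p.1).flatten = s

/-!
Write `Z s` as `m₁ a₁ m₂ a₂ … m_k a_k`, where `a_i` are the digits of the runs of `s` and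
`m_i = max n_i a_i` (a single digit, since all digits and run lengths are at most 9).
Consecutive `a_i` are distinct, and any four consecutive letters of `Z s` contain some
`a_i a_{i+1}`, so no letter repeats four times in a row.
-/

open List

theorem rle_snd_pos_and_flatten (s : List ℕ) :
    (∀ p ∈ rle s, 0 < p.2) ∧ ((rle s).map fun p => replicate p.2 p.1).flatten = s := by
  induction s with
  | nil => simp [rle]
  | cons a t ih =>
    obtain ⟨hpos, hflat⟩ := ih
    simp only [rle]
    rcases h : rle t with _ | ⟨⟨b, n⟩, r⟩
    · simp_all
    · rw [h] at hpos hflat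
      dsimp only
      split_ifs with hab
      · subst hab
        exact ⟨forall_mem_cons.2 ⟨n.succ_pos, (forall_mem_cons.1 hpos).2⟩,
          by simp [replicate_succ, ← hflat]⟩
      · exact ⟨forall_mem_cons.2 ⟨Nat.one_pos, hpos⟩, by simp [← hflat]⟩

theorem isChain_map_fst_rle (s : List ℕ) : ((rle s).map Prod.fst).IsChain (· ≠ ·) := by
  induction s with
  | nil => simp [rle]
  | cons a t ih =>
    rcases h : rle t with _ | ⟨⟨b, n⟩, r⟩
    · simp [rle, h]
    · rw [h] at ih
      by_cases hab : a = b <;> simpa [rle, h, hab] using ih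

theorem replicate_infix_of_mem_rle {s : List ℕ} {p : ℕ × ℕ} (hp : p ∈ rle s) :
    replicate p.2 p.1 <:+: s :=
  (rle_snd_pos_and_flatten s).2 ▸ infix_of_mem_flatten (mem_map_of_mem hp)

theorem fst_mem_of_mem_rle {s : List ℕ} {p : ℕ × ℕ} (hp : p ∈ rle s) : p.1 ∈ s :=
  (replicate_infix_of_mem_rle hp).subset
    (mem_replicate.2 ⟨((rle_snd_pos_and_flatten s).1 p hp).ne', rfl⟩)

theorem snd_le_of_forall_not_replicate_infix {s : List ℕ} {n : ℕ}
    (hs : ∀ x, ¬ replicate (n + 1) x <:+: s) {p : ℕ × ℕ} (hp : p ∈ rle s) : p.2 ≤ n := by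
  by_contra! hlt
  refine hs p.1 (IsInfix.trans ?_ (replicate_infix_of_mem_rle hp))
  obtain ⟨k, hk⟩ := Nat.exists_eq_add_of_le hlt
  have h := (prefix_append (replicate (n + 1) p.1) (replicate k p.1)).isInfix
  rwa [← replicate_add, ← hk] at h

theorem not_replicate_four_infix_flatten_pairs {α β : Type*} (f g : β → α) (L : List β)
    (hL : (L.map g).IsChain (· ≠ ·)) (x : α) :
    ¬ replicate 4 x <:+: (L.map fun q => [f q, g q]).flatten := by
  induction L with
  | nil => simp
  | cons q L ih =>
    rcases L with _ | ⟨q', L⟩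
    · intro h
      simpa using h.length_le
    · obtain ⟨hne, hL'⟩ := isChain_cons_cons.1 hL
      have ih := ih hL'
      simp only [map_cons, flatten_cons, cons_append, nil_append] at ih ⊢
      rw [infix_cons_iff, infix_cons_iff]
      rintro (h | h | h)
      · obtain ⟨-, hx, -, hx'⟩ : x = f q ∧ x = g q ∧ x = f q' ∧ x = g q' := by
          simpa [replicate_succ] using h
        exact hne (hx.symm.trans hx')
      · obtain ⟨hx, -, hx', -⟩ : x = g q ∧ x = f q' ∧ x = g q' ∧ _ := by
          simpa [replicate_succ] using h
        exact hne (hx.symm.trans hx')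
      · exact ih h

theorem Z_eq_flatten_of_le_nine {s : List ℕ} (hdig : ∀ d ∈ s, d ≤ 9)
    (hrun : ∀ p ∈ rle s, p.2 ≤ 9) :
    Z s = ((rle s).map fun p => [max p.2 p.1, p.1]).flatten := by
  refine congrArg flatten (map_congr_left fun p hp => ?_)
  have hpos := (rle_snd_pos_and_flatten s).1 p hp
  have hfst := hdig _ (fst_mem_of_mem_rle hp)
  have hsnd := hrun p hp
  rw [Nat.digits_of_lt 10 _ (by omega) (by omega)]
  rfl

theorem Z_adult_runs_le_three_general (s : List ℕ) (hdig : ∀ d ∈ s, d ≤ 9)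
    (hrun : ∀ p ∈ rle s, p.2 ≤ 9) :
    ∀ p ∈ rle (Z s), p.2 ≤ 3 := by
  rw [Z_eq_flatten_of_le_nine hdig hrun]
  exact fun p => snd_le_of_forall_not_replicate_infix
    (not_replicate_four_infix_flatten_pairs _ _ _ (isChain_map_fst_rle s))

/-- For an adult string with run lengths ≤ 9, every run of `Z(s)` has length at most 3. -/
theorem Z_adult_runs_le_three (s : List ℕ) (hdig : ∀ d ∈ s, d ≤ 9)
    (hadult : ∀ d ∈ s, 4 ≤ d) (hrun : ∀ p ∈ rle s, p.2 ≤ 9) :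
    ∀ p ∈ rle (Z s), p.2 ≤ 3 :=
  Z_adult_runs_le_three_general s hdig hrun
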